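/- arXiv:2006.04281 — 5 statements merged into one kernel-verified Lean document; each statement's English description precedes it below -/
import Mathlib

section
/- Let d, m, δ be integers with d ≥ 4, m ≥ 1, 0 ≤ δ ≤ m², and (d−2)m² < d(d−4)m + 2d. Then −dδ² + 2m²δ + d(2+(d−4)m)² + 2m²(2+(d−4)m) ≠ 0. -/
theorem det_ne_zero_of_ineq (d m δ : ℤ) (hd : 4 ≤ d) (hm : 1 ≤ m)
    (hδ0 : 0 ≤ δ) (hδm : δ ≤ m ^ 2)
    (hineq : (d - 2) * m ^ 2 < d * (d - 4) * m + 2 * d) :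
    -d * δ ^ 2 + 2 * m ^ 2 * δ + d * (2 + (d - 4) * m) ^ 2
        + 2 * m ^ 2 * (2 + (d - 4) * m) ≠ 0 := by
  have hc : 0 < 2 + (d - 4) * m := by nlinarith
  have hdc : (d - 2) * m ^ 2 < d * (2 + (d - 4) * m) := by nlinarith
  have hpos : 0 < -d * δ ^ 2 + 2 * m ^ 2 * δ + d * (2 + (d - 4) * m) ^ 2
        + 2 * m ^ 2 * (2 + (d - 4) * m) := by
    nlinarith [mul_nonneg hδ0 (sub_nonneg.2 hδm), mul_pos hc hc,
      mul_pos hc (sub_pos.2 hdc), mul_nonneg (mul_nonneg hδ0 (sub_nonneg.2 hδm)) (by linarith : (0:ℤ) ≤ d),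
      mul_nonneg hδ0 (le_of_lt hc), mul_nonneg (sub_nonneg.2 hδm) (le_of_lt hc),
      mul_nonneg (sub_nonneg.2 hδm) (le_of_lt (sub_pos.2 hdc)),
      mul_nonneg hδ0 (le_of_lt (sub_pos.2 hdc))]
  omega
end

section
/- Let d, m, δ be integers with d ≥ 4, m ≥ 1, δ ≥ 0, and suppose d does not divide 2m². Then −dδ² + 2m²δ + d(2+(d−4)m)² + 2m²(2+(d−4)m) ≠ 0. -/
theorem det_ne_zero_of_not_dvd (d m δ : ℤ) (hd : 4 ≤ d) (hm : 1 ≤ m)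
    (hδ0 : 0 ≤ δ) (hdvd : ¬ d ∣ 2 * m ^ 2) :
    -d * δ ^ 2 + 2 * m ^ 2 * δ + d * (2 + (d - 4) * m) ^ 2
        + 2 * m ^ 2 * (2 + (d - 4) * m) ≠ 0 := by
  intro h
  have hfac : (δ + (2 + (d - 4) * m)) * (d * ((2 + (d - 4) * m) - δ) + 2 * m ^ 2) = 0 := by
    linear_combination h
  rcases mul_eq_zero.mp hfac with h1 | h2
  · nlinarith
  · exact hdvd ⟨δ - (2 + (d - 4) * m), by linarith⟩
end

section
/- Let k be a field of characteristic p > 0. Then the map from (RatFunc k) × (RatFunc k) to RatFunc k sending (x, y) to x^p + t·y^p, where t denotes the indeterminate X of RatFunc k, is injective. -/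
/-!
Since Frobenius is additive, two pairs with the same value satisfy
`(x₁ - x₂) ^ p = t * (y₂ - y₁) ^ p`, so `y₁ ≠ y₂` would make `t` a `p`-th power; it is not,
because `intDegree (r ^ p) = p * intDegree r` while `intDegree t = 1`. Then `y₁ = y₂`, and
`x₁ = x₂` by injectivity of Frobenius.
-/

namespace RatFunc

variable {K : Type*} [Field K]

theorem intDegree_pow {r : RatFunc K} (hr : r ≠ 0) (n : ℕ) :
    (r ^ n).intDegree = n * r.intDegree := by
  induction n with
  | zero => simp
  | succ n ih =>
    rw [pow_succ, intDegree_mul (pow_ne_zero _ hr) hr, ih]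
    push_cast
    ring

theorem pow_ne_X {n : ℕ} (hn : 2 ≤ n) (r : RatFunc K) : r ^ n ≠ X := by
  intro hrX
  have hr : r ≠ 0 := by
    rintro rfl
    rw [zero_pow (by omega)] at hrX
    exact X_ne_zero hrX.symm
  have hdvd : (n : ℤ) ∣ 1 :=
    ⟨r.intDegree, by rw [← intDegree_X (K := K), ← hrX, intDegree_pow hr]⟩
  have := Int.le_of_dvd one_pos hdvd
  omega

end RatFunc

theorem pow_add_mul_pow_injective {K : Type*} [Field K] (p : ℕ) [ExpChar K p] {a : K}
    (ha : ∀ r : K, r ^ p ≠ a) :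
    Function.Injective (fun xy : K × K => xy.1 ^ p + a * xy.2 ^ p) := by
  rintro ⟨x₁, y₁⟩ ⟨x₂, y₂⟩ (h : x₁ ^ p + a * y₁ ^ p = x₂ ^ p + a * y₂ ^ p)
  have hdiff : (x₁ - x₂) ^ p = a * (y₂ - y₁) ^ p := by
    rw [sub_pow_expChar, sub_pow_expChar]
    linear_combination h
  have hy : y₁ = y₂ := by
    by_contra hne
    have hne' : (y₂ - y₁) ^ p ≠ 0 := pow_ne_zero _ (sub_ne_zero.mpr (Ne.symm hne))
    exact ha ((x₁ - x₂) / (y₂ - y₁)) (by rw [div_pow, hdiff, mul_div_cancel_right₀ _ hne'])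
  subst hy
  rw [frobenius_inj K p (add_right_cancel h : x₁ ^ p = x₂ ^ p)]

theorem frobenius_twist_injective (k : Type*) [Field k] (p : ℕ) [CharP k p]
    (hp : 0 < p) :
    Function.Injective (fun xy : RatFunc k × RatFunc k =>
      xy.1 ^ p + RatFunc.X * xy.2 ^ p) := by
  have hprime : p.Prime := (CharP.char_is_prime_or_zero k p).resolve_right hp.ne'
  have : Fact p.Prime := ⟨hprime⟩
  exact pow_add_mul_pow_injective p (RatFunc.pow_ne_X hprime.two_le)
end

section
/- Let p be a prime with p ≠ 13, and let k be the finite field with p^12 elements (GaloisField p 12). Then the map from (RatFunc k) × (RatFunc k) to RatFunc k sending (x, y) to x^13 + t·y^13, where t denotes the indeterminate X of RatFunc k, is not injective. -/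
theorem not_injective_x13_ty13 (p : ℕ) [Fact p.Prime] (hp : p ≠ 13) :
    ¬ Function.Injective (fun xy : RatFunc (GaloisField p 12) × RatFunc (GaloisField p 12) =>
        xy.1 ^ 13 + RatFunc.X * xy.2 ^ 13) := by
  haveI : Fintype (GaloisField p 12) := Fintype.ofFinite _
  have hcard : Fintype.card (GaloisField p 12) = p ^ 12 := by
    have := GaloisField.card p 12 (by norm_num)
    simpa using this
  have hpprime : p.Prime := Fact.out
  haveI : Fintype (GaloisField p 12)ˣ := Fintype.ofFinite _
  haveI : Fact (Nat.Prime 13) := ⟨by norm_num⟩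
  -- 13 ∣ p^12 - 1
  have h13 : (13 : ℕ) ∣ p ^ 12 - 1 := by
    have hp0 : (p : ZMod 13) ≠ 0 := by
      intro h
      have hd : (13 : ℕ) ∣ p := (ZMod.natCast_eq_zero_iff p 13).mp h
      exact hp ((Nat.prime_dvd_prime_iff_eq (by norm_num) hpprime).mp hd).symm
    have hfe : (p : ZMod 13) ^ 12 = 1 := by
      have := ZMod.pow_card_sub_one_eq_one hp0
      simpa using this
    have h1 : ((p ^ 12 - 1 : ℕ) : ZMod 13) = 0 := by
      have hge : 1 ≤ p ^ 12 := Nat.one_le_pow _ _ hpprime.pos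
      rw [Nat.cast_sub hge]
      push_cast
      rw [hfe]; ring
    exact (ZMod.natCast_eq_zero_iff _ _).mp h1
  -- units group has an element of order 13
  have hdvd : (13 : ℕ) ∣ Fintype.card (GaloisField p 12)ˣ := by
    rw [Fintype.card_eq_nat_card, Nat.card_units, Nat.card_eq_fintype_card, hcard]; exact h13
  obtain ⟨ζ, hζ⟩ := exists_prime_orderOf_dvd_card (G := (GaloisField p 12)ˣ) 13 hdvd
  have hζ13 : (ζ : GaloisField p 12) ^ 13 = 1 := by
    have h := pow_orderOf_eq_one ζ
    rw [hζ] at h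
    rw [← Units.val_pow_eq_pow_val, h, Units.val_one]
  have hζne : (ζ : GaloisField p 12) ≠ 1 := by
    intro h
    have h1 : ζ = 1 := Units.ext h
    rw [h1, orderOf_one] at hζ
    norm_num at hζ
  intro hinj
  have key := hinj (a₁ := (RatFunc.C (ζ : GaloisField p 12), RatFunc.C (ζ : GaloisField p 12)))
    (a₂ := (1, 1)) ?_
  · have h1 : RatFunc.C (ζ : GaloisField p 12) = 1 := congrArg Prod.fst key
    rw [← map_one (RatFunc.C (K := GaloisField p 12))] at h1
    exact hζne (RatFunc.C.injective h1)
  · simp only [← map_pow, hζ13, map_one, one_pow]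
end

section
/- Let k be a field, let m, d be positive integers, and let f₀, f₁, f₂, f₃ ∈ k[t] be polynomials each of degree at most m. If the binomial coefficient C(d+3, 3) is strictly greater than d·m + 1, then there exists a nonzero polynomial F in four variables over k, homogeneous of degree d, such that F(f₀, f₁, f₂, f₃) = 0 in k[t]. -/
/-!
Evaluation at `f` is a linear map from the forms of degree `d` in four variables, a space of
dimension `C(d + 3, 3)`, into the polynomials of degree at most `d * m`, a space of dimension
`d * m + 1`. When the source is larger, the map has a nonzero kernel.
-/

open Polynomial Module

namespace MvPolynomial

theorem finrank_homogeneousSubmodule (σ k : Type*) [Fintype σ] [Field k] (n : ℕ) :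
    finrank k (homogeneousSubmodule σ k n) = (Fintype.card σ + n - 1).choose n := by
  classical
  have hexponents : {s : σ →₀ ℕ | s.degree = n} =
      ((Finset.univ : Finset σ).finsuppAntidiag n : Set (σ →₀ ℕ)) := by
    ext s
    simp [Finsupp.degree_eq_sum]
  rw [homogeneousSubmodule_eq_finsupp_supported, hexponents,
    (AddMonoidAlgebra.supportedEquivFinsupp _).finrank_eq, finrank_finsupp_self]
  simp only [Finset.coe_sort_coe, Fintype.card_coe, Finset.card_finsuppAntidiag_nat_eq_choose,
    Finset.card_univ]

theorem natDegree_aeval_monomial_le {σ R : Type*} [CommSemiring R] {f : σ → R[X]} {m : ℕ}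
    (hf : ∀ i, (f i).natDegree ≤ m) (s : σ →₀ ℕ) (c : R) :
    (aeval f (monomial s c)).natDegree ≤ s.degree * m := by
  rw [aeval_monomial, Finsupp.degree_apply, Finset.sum_mul, Polynomial.algebraMap_eq]
  exact (natDegree_C_mul_le _ _).trans <| (natDegree_prod_le _ _).trans <|
    Finset.sum_le_sum fun i _ => natDegree_pow_le_of_le _ (hf i)

theorem natDegree_aeval_le_totalDegree_mul {σ R : Type*} [CommSemiring R] {f : σ → R[X]}
    {m : ℕ} (hf : ∀ i, (f i).natDegree ≤ m) (p : MvPolynomial σ R) :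
    (aeval f p).natDegree ≤ p.totalDegree * m := by
  conv_lhs => rw [p.as_sum, map_sum]
  exact natDegree_sum_le_of_forall_le _ _ fun s hs =>
    (natDegree_aeval_monomial_le hf s _).trans (Nat.mul_le_mul_right _ (le_totalDegree hs))

theorem aeval_mem_degreeLT_of_isHomogeneous {σ R : Type*} [CommSemiring R] {f : σ → R[X]}
    {m n : ℕ} (hf : ∀ i, (f i).natDegree ≤ m) {p : MvPolynomial σ R} (hp : p.IsHomogeneous n) :
    aeval f p ∈ degreeLT R (n * m + 1) := by
  rw [mem_degreeLT]
  refine degree_le_natDegree.trans_lt (WithBot.coe_lt_coe.mpr (Nat.lt_succ_of_le ?_))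
  exact (natDegree_aeval_le_totalDegree_mul hf p).trans
    (Nat.mul_le_mul_right _ hp.totalDegree_le)

theorem exists_ne_zero_isHomogeneous_aeval_eq_zero {σ k : Type*} [Fintype σ] [Field k]
    {f : σ → k[X]} {m n : ℕ} (hf : ∀ i, (f i).natDegree ≤ m)
    (hcount : n * m + 1 < (Fintype.card σ + n - 1).choose n) :
    ∃ p : MvPolynomial σ k, p ≠ 0 ∧ p.IsHomogeneous n ∧ aeval f p = 0 := by
  let evalForms : homogeneousSubmodule σ k n →ₗ[k] degreeLT k (n * m + 1) :=
    LinearMap.codRestrict _ ((aeval f).toLinearMap.domRestrict _) fun p =>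
      aeval_mem_degreeLT_of_isHomogeneous hf p.2
  have : FiniteDimensional k (homogeneousSubmodule σ k n) :=
    Module.Finite.iff_fg.mpr (homogeneousSubmodule_fg σ k n)
  have hker : LinearMap.ker evalForms ≠ ⊥ := LinearMap.ker_ne_bot_of_finrank_lt <| by
    rwa [(degreeLTEquiv k _).finrank_eq, finrank_fin_fun, finrank_homogeneousSubmodule]
  obtain ⟨p, hp, hp0⟩ := (Submodule.ne_bot_iff _).mp hker
  exact ⟨p, by simpa using hp0, p.2, congrArg Subtype.val hp⟩

end MvPolynomial

theorem exists_homogeneous_form_vanishing_general (k : Type*) [Field k] (m d : ℕ)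
    (f : Fin 4 → Polynomial k)
    (hdeg : ∀ i, (f i).natDegree ≤ m)
    (hcount : d * m + 1 < (d + 3).choose 3) :
    ∃ F : MvPolynomial (Fin 4) k, F ≠ 0 ∧ F.IsHomogeneous d ∧
      MvPolynomial.aeval f F = 0 := by
  refine MvPolynomial.exists_ne_zero_isHomogeneous_aeval_eq_zero hdeg ?_
  rwa [Fintype.card_fin, show 4 + d - 1 = d + 3 by omega, Nat.choose_symm_add]

theorem exists_homogeneous_form_vanishing (k : Type*) [Field k] (m d : ℕ)
    (hm : 0 < m) (hd : 0 < d) (f : Fin 4 → Polynomial k)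
    (hdeg : ∀ i, (f i).natDegree ≤ m)
    (hcount : d * m + 1 < (d + 3).choose 3) :
    ∃ F : MvPolynomial (Fin 4) k, F ≠ 0 ∧ F.IsHomogeneous d ∧
      MvPolynomial.aeval f F = 0 :=
  exists_homogeneous_form_vanishing_general k m d f hdeg hcount
end
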